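/- arXiv:1909.06985 — 4 statements merged into one kernel-verified Lean document; each statement's English description precedes it below -/
import Mathlib

section
/- Let X₁ be an m₁ × n₁ complex matrix and X₂ an m₂ × n₂ complex matrix, each with at least two columns and all columns nonzero. Then the mutual coherence of the Kronecker product W = X₁ ⊗ X₂ satisfies μ(W) = max{μ(X₁), μ(X₂)}. -/
open scoped BigOperators

noncomputable section

/-- The standard Hermitian inner product on ℂ^ι. -/
def vHerm {ι : Type*} [Fintype ι] (u v : ι → ℂ) : ℂ := ∑ i, star (u i) * v i

/-- The Euclidean norm on ℂ^ι. -/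
def vNorm {ι : Type*} [Fintype ι] (u : ι → ℂ) : ℝ := Real.sqrt (∑ i, ‖u i‖ ^ 2)

/-- The mutual coherence of a matrix: the largest value of
`|⟨θ_i, θ_j⟩| / (‖θ_i‖₂ ‖θ_j‖₂)` over pairs of distinct columns `θ_i, θ_j`. -/
def mutualCoherence {m n : Type*} [Fintype m] (Θ : Matrix m n ℂ) : ℝ :=
  sSup {x : ℝ | ∃ i j : n, i ≠ j ∧
    x = ‖vHerm (fun k => Θ k i) (fun k => Θ k j)‖ /
      (vNorm (fun k => Θ k i) * vNorm (fun k => Θ k j))}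

/-! The columns of `X₁ ⊗ X₂` are the tensor products `u ⊗ v` of columns of `X₁` and `X₂`, and
the cosine `|⟨u, v⟩| / (‖u‖ ‖v‖)` is multiplicative on tensor products. Every cosine is at most `1`,
with equality for a nonzero column against itself. Hence the cosine of two distinct columns of
`X₁ ⊗ X₂` is bounded by `μ(X₁) · 1` or by `1 · μ(X₂)`, and pairing a column with itself in one
factor reproduces every cosine of the other factor. -/

section Vectors

variable {ι κ : Type*} [Fintype ι] [Fintype κ]

def vCoherence (u v : ι → ℂ) : ℝ := ‖vHerm u v‖ / (vNorm u * vNorm v)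

lemma vHerm_eq_inner (u v : ι → ℂ) :
    vHerm u v = inner ℂ (WithLp.toLp 2 u) (WithLp.toLp 2 v) := by
  simp [vHerm, PiLp.inner_apply, mul_comm]

lemma vNorm_eq_norm (u : ι → ℂ) : vNorm u = ‖WithLp.toLp 2 u‖ := by
  rw [EuclideanSpace.norm_eq]
  rfl

lemma vCoherence_nonneg (u v : ι → ℂ) : 0 ≤ vCoherence u v := by
  unfold vCoherence
  rw [vNorm_eq_norm, vNorm_eq_norm]
  positivity

lemma vCoherence_le_one (u v : ι → ℂ) : vCoherence u v ≤ 1 := by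
  unfold vCoherence
  rw [vHerm_eq_inner, vNorm_eq_norm, vNorm_eq_norm]
  exact div_le_one_of_le₀ (norm_inner_le_norm _ _) (by positivity)

lemma vCoherence_self {u : ι → ℂ} (hu : u ≠ 0) : vCoherence u u = 1 := by
  have hnorm : ‖WithLp.toLp 2 u‖ ≠ 0 := by simpa using hu
  unfold vCoherence
  rw [vHerm_eq_inner, vNorm_eq_norm, inner_self_eq_norm_sq_to_K, norm_pow,
    RCLike.norm_ofReal, abs_norm, sq]
  exact div_self (mul_ne_zero hnorm hnorm)

lemma vHerm_kron (u₁ v₁ : ι → ℂ) (u₂ v₂ : κ → ℂ) :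
    vHerm (fun p : ι × κ => u₁ p.1 * u₂ p.2) (fun p => v₁ p.1 * v₂ p.2) =
      vHerm u₁ v₁ * vHerm u₂ v₂ := by
  unfold vHerm
  rw [Fintype.sum_prod_type, Finset.sum_mul_sum]
  refine Finset.sum_congr rfl fun a _ => Finset.sum_congr rfl fun b _ => ?_
  rw [star_mul']
  ring

lemma vNorm_kron (u : ι → ℂ) (v : κ → ℂ) :
    vNorm (fun p : ι × κ => u p.1 * v p.2) = vNorm u * vNorm v := by
  unfold vNorm
  rw [← Real.sqrt_mul (by positivity), Fintype.sum_prod_type, Finset.sum_mul_sum]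
  simp only [norm_mul, mul_pow]

lemma vCoherence_kron (u₁ v₁ : ι → ℂ) (u₂ v₂ : κ → ℂ) :
    vCoherence (fun p : ι × κ => u₁ p.1 * u₂ p.2) (fun p => v₁ p.1 * v₂ p.2) =
      vCoherence u₁ v₁ * vCoherence u₂ v₂ := by
  unfold vCoherence
  rw [vHerm_kron, vNorm_kron, vNorm_kron, norm_mul, mul_mul_mul_comm, mul_div_mul_comm]

end Vectors

section Matrices

variable {m n : Type*} [Fintype m] (Θ : Matrix m n ℂ)

lemma mutualCoherence_nonneg : 0 ≤ mutualCoherence Θ :=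
  Real.sSup_nonneg <| by
    rintro _ ⟨i, j, -, rfl⟩
    exact vCoherence_nonneg _ _

lemma mutualCoherence_le {M : ℝ} (hM : 0 ≤ M)
    (h : ∀ i j, i ≠ j → vCoherence (fun k => Θ k i) (fun k => Θ k j) ≤ M) :
    mutualCoherence Θ ≤ M :=
  Real.sSup_le (by rintro _ ⟨i, j, hij, rfl⟩; exact h i j hij) hM

lemma vCoherence_le_mutualCoherence [Finite n] {i j : n} (hij : i ≠ j) :
    vCoherence (fun k => Θ k i) (fun k => Θ k j) ≤ mutualCoherence Θ := by
  refine le_csSup (Set.Finite.bddAbove ?_) ⟨i, j, hij, rfl⟩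
  refine (Set.finite_range fun p : n × n =>
    vCoherence (fun k => Θ k p.1) (fun k => Θ k p.2)).subset ?_
  rintro _ ⟨i, j, -, rfl⟩
  exact ⟨(i, j), rfl⟩

end Matrices

section Kronecker

variable {m₁ n₁ m₂ n₂ : Type*} [Fintype m₁] [Fintype m₂]
  (X₁ : Matrix m₁ n₁ ℂ) (X₂ : Matrix m₂ n₂ ℂ)

lemma vCoherence_kroneckerMap_col (p q : n₁ × n₂) :
    vCoherence (fun k => Matrix.kroneckerMap (· * ·) X₁ X₂ k p)
        (fun k => Matrix.kroneckerMap (· * ·) X₁ X₂ k q) =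
      vCoherence (fun k => X₁ k p.1) (fun k => X₁ k q.1) *
        vCoherence (fun k => X₂ k p.2) (fun k => X₂ k q.2) :=
  vCoherence_kron (fun k => X₁ k p.1) (fun k => X₁ k q.1) (fun k => X₂ k p.2) (fun k => X₂ k q.2)

lemma mutualCoherence_kroneckerMap_le [Finite n₁] [Finite n₂] :
    mutualCoherence (Matrix.kroneckerMap (· * ·) X₁ X₂) ≤
      max (mutualCoherence X₁) (mutualCoherence X₂) := by
  refine mutualCoherence_le _ (le_max_of_le_left (mutualCoherence_nonneg X₁)) fun p q hpq => ?_
  rw [vCoherence_kroneckerMap_col]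
  by_cases h₁ : p.1 = q.1
  · have h₂ : p.2 ≠ q.2 := fun h₂ => hpq (Prod.ext h₁ h₂)
    calc _ ≤ 1 * mutualCoherence X₂ :=
          mul_le_mul (vCoherence_le_one _ _) (vCoherence_le_mutualCoherence X₂ h₂)
            (vCoherence_nonneg _ _) zero_le_one
      _ ≤ _ := (one_mul _).trans_le (le_max_right _ _)
  · calc _ ≤ mutualCoherence X₁ * 1 :=
          mul_le_mul (vCoherence_le_mutualCoherence X₁ h₁) (vCoherence_le_one _ _)
            (vCoherence_nonneg _ _) (mutualCoherence_nonneg X₁)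
      _ ≤ _ := (mul_one _).trans_le (le_max_left _ _)

lemma mutualCoherence_le_kroneckerMap_left [Finite n₁] [Finite n₂] {c : n₂}
    (hc : (fun k => X₂ k c) ≠ 0) :
    mutualCoherence X₁ ≤ mutualCoherence (Matrix.kroneckerMap (· * ·) X₁ X₂) := by
  refine mutualCoherence_le _ (mutualCoherence_nonneg _) fun i j hij => ?_
  have h := vCoherence_le_mutualCoherence (Matrix.kroneckerMap (· * ·) X₁ X₂)
    (i := (i, c)) (j := (j, c)) fun h => hij (congrArg Prod.fst h)
  rwa [vCoherence_kroneckerMap_col, vCoherence_self hc, mul_one] at h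

lemma mutualCoherence_le_kroneckerMap_right [Finite n₁] [Finite n₂] {c : n₁}
    (hc : (fun k => X₁ k c) ≠ 0) :
    mutualCoherence X₂ ≤ mutualCoherence (Matrix.kroneckerMap (· * ·) X₁ X₂) := by
  refine mutualCoherence_le _ (mutualCoherence_nonneg _) fun i j hij => ?_
  have h := vCoherence_le_mutualCoherence (Matrix.kroneckerMap (· * ·) X₁ X₂)
    (i := (c, i)) (j := (c, j)) fun h => hij (congrArg Prod.snd h)
  rwa [vCoherence_kroneckerMap_col, vCoherence_self hc, one_mul] at h

end Kronecker

/-- For matrices `X₁`, `X₂` with at least two columns each and all columns nonzero,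
the mutual coherence of the Kronecker product `W = X₁ ⊗ X₂` satisfies
`μ(W) = max {μ(X₁), μ(X₂)}`. -/
theorem mutualCoherence_kronecker {m₁ n₁ m₂ n₂ : ℕ}
    (X₁ : Matrix (Fin m₁) (Fin n₁) ℂ) (X₂ : Matrix (Fin m₂) (Fin n₂) ℂ)
    (hn₁ : 2 ≤ n₁) (hn₂ : 2 ≤ n₂)
    (hc₁ : ∀ j, ∃ i, X₁ i j ≠ 0) (hc₂ : ∀ j, ∃ i, X₂ i j ≠ 0) :
    mutualCoherence (Matrix.kroneckerMap (· * ·) X₁ X₂) =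
      max (mutualCoherence X₁) (mutualCoherence X₂) :=
  le_antisymm (mutualCoherence_kroneckerMap_le X₁ X₂) <| max_le
    (mutualCoherence_le_kroneckerMap_left X₁ X₂ (c := ⟨0, by omega⟩) (Function.ne_iff.2 (hc₂ _)))
    (mutualCoherence_le_kroneckerMap_right X₁ X₂ (c := ⟨0, by omega⟩) (Function.ne_iff.2 (hc₁ _)))

end
end

section
/- Let F_q be a finite field with q elements and let r be an integer with 1 ≤ r < q. For any two distinct polynomials P and Q over F_q of degree at most r, the inner product of the corresponding columns of the DeVore matrix equals the number of x ∈ F_q with P(x) = Q(x), which is at most r. Consequently, the mutual coherence of the DeVore matrix satisfies μ(D) ≤ r/q. -/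
open scoped BigOperators

noncomputable section

/-- The DeVore matrix: rows indexed by pairs `(x, y) ∈ F × F`, columns indexed by
polynomials over `F` of degree at most `r`, with entry `1` if `P x = y` and `0` otherwise. -/
def deVore (F : Type*) [Field F] [DecidableEq F] (r : ℕ) :
    Matrix (F × F) {P : Polynomial F // P.degree ≤ (r : WithBot ℕ)} ℂ :=
  Matrix.of fun xy P => if P.1.eval xy.1 = xy.2 then 1 else 0

instance deVoreColFinite (F : Type*) [Field F] [Finite F] (r : ℕ) :
    Finite {P : Polynomial F // P.degree ≤ (r : WithBot ℕ)} := by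
  have : Finite (Fin (r + 1) → F) := inferInstance
  refine Finite.of_injective
    (fun P : {P : Polynomial F // P.degree ≤ (r : WithBot ℕ)} =>
      fun i : Fin (r + 1) => P.1.coeff i) ?_
  rintro ⟨P, hP⟩ ⟨Q, hQ⟩ h
  ext1
  ext n
  by_cases hn : n ≤ r
  · have := congrFun h ⟨n, Nat.lt_succ_of_le hn⟩
    simpa using this
  · push_neg at hn
    rw [Polynomial.coeff_eq_zero_of_degree_lt (lt_of_le_of_lt hP (by exact_mod_cast hn)),
      Polynomial.coeff_eq_zero_of_degree_lt (lt_of_le_of_lt hQ (by exact_mod_cast hn))]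

noncomputable instance deVoreColFintype (F : Type*) [Field F] [Fintype F] (r : ℕ) :
    Fintype {P : Polynomial F // P.degree ≤ (r : WithBot ℕ)} :=
  Fintype.ofFinite _
/-! Columns of `deVore F r` are indicator vectors of graphs `{(x, P x)}`: two such columns overlap
exactly above the points where the graphs meet, and two distinct polynomials of degree `≤ r` meet
in at most `r` points, since their difference has at most `r` roots. Every column has `q` ones. -/

open Polynomial

theorem Polynomial.card_eval_eq_le_of_degree_le {R : Type*} [CommRing R] [IsDomain R]
    [DecidableEq R] {p q : R[X]} {n : ℕ} (hp : p.degree ≤ n) (hq : q.degree ≤ n) (hpq : p ≠ q) :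
    Nat.card {x // p.eval x = q.eval x} ≤ n := by
  have hsub : p - q ≠ 0 := sub_ne_zero.mpr hpq
  have hroots : ∀ x, p.eval x = q.eval x ↔ x ∈ (p - q).roots.toFinset := fun x => by
    simp [mem_roots hsub, sub_eq_zero]
  calc Nat.card {x // p.eval x = q.eval x}
      = (p - q).roots.toFinset.card := by
        rw [Nat.card_congr (Equiv.subtypeEquivRight hroots), Nat.card_eq_fintype_card,
          Fintype.card_coe]
    _ ≤ Multiset.card (p - q).roots := Multiset.toFinset_card_le _
    _ ≤ (p - q).natDegree := card_roots' _
    _ ≤ n := natDegree_le_iff_degree_le.mpr ((degree_sub_le _ _).trans (max_le hp hq))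

section GraphIndicator

variable {X Y : Type*} [Fintype X] [Fintype Y] [DecidableEq Y]

def graphIndicator (f : X → Y) : X × Y → ℂ := fun xy => if f xy.1 = xy.2 then 1 else 0

theorem vHerm_graphIndicator (f g : X → Y) :
    vHerm (graphIndicator f) (graphIndicator g) = (Nat.card {x // f x = g x} : ℂ) := by
  have hfiber : ∀ x, ∑ y, star (graphIndicator f (x, y)) * graphIndicator g (x, y)
      = if f x = g x then 1 else 0 := fun x => by
    simp [graphIndicator, apply_ite (star : ℂ → ℂ)]
  rw [vHerm, Fintype.sum_prod_type, Finset.sum_congr rfl fun x _ => hfiber x,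
    Finset.sum_boole, Nat.card_eq_fintype_card, Fintype.card_subtype]

theorem vNorm_graphIndicator (f : X → Y) :
    vNorm (graphIndicator f) = √(Fintype.card X) := by
  have hfiber : ∀ x, ∑ y, ‖graphIndicator f (x, y)‖ ^ 2 = 1 := fun x => by
    simp [graphIndicator, apply_ite (‖·‖), apply_ite (· ^ 2 : ℝ → ℝ)]
  rw [vNorm, Fintype.sum_prod_type, Finset.sum_congr rfl fun x _ => hfiber x]
  simp

end GraphIndicator

theorem mutualCoherence_le_div {m n : Type*} [Fintype m] {Θ : Matrix m n ℂ} {s c : ℝ}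
    (hs : 0 ≤ s) (hc : 0 ≤ c) (hnorm : ∀ i, vNorm (fun k => Θ k i) = √c)
    (hinner : ∀ i j, i ≠ j → ‖vHerm (fun k => Θ k i) (fun k => Θ k j)‖ ≤ s) :
    mutualCoherence Θ ≤ s / c := by
  refine Real.sSup_le ?_ (div_nonneg hs hc)
  rintro _ ⟨i, j, hij, rfl⟩
  rw [hnorm, hnorm, Real.mul_self_sqrt hc]
  exact div_le_div_of_nonneg_right (hinner i j hij) hc

theorem deVore_col {F : Type*} [Field F] [DecidableEq F] {r : ℕ}
    (P : {P : Polynomial F // P.degree ≤ (r : WithBot ℕ)}) :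
    (fun xy => deVore F r xy P) = graphIndicator P.1.eval :=
  rfl

theorem deVore_coherence_le_general (F : Type*) [Field F] [Fintype F] [DecidableEq F]
    (q r : ℕ) (hq : Fintype.card F = q) :
    (∀ P Q : {P : Polynomial F // P.degree ≤ (r : WithBot ℕ)}, P ≠ Q →
      vHerm (fun xy => deVore F r xy P) (fun xy => deVore F r xy Q)
          = (Nat.card {x : F // P.1.eval x = Q.1.eval x} : ℂ) ∧
      Nat.card {x : F // P.1.eval x = Q.1.eval x} ≤ r) ∧
    mutualCoherence (deVore F r) ≤ (r : ℝ) / q := by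
  have hcard : ∀ P Q : {P : Polynomial F // P.degree ≤ (r : WithBot ℕ)}, P ≠ Q →
      Nat.card {x : F // P.1.eval x = Q.1.eval x} ≤ r := fun P Q hPQ =>
    card_eval_eq_le_of_degree_le P.2 Q.2 (Subtype.coe_injective.ne hPQ)
  refine ⟨fun P Q hPQ => ⟨by rw [deVore_col, deVore_col, vHerm_graphIndicator], hcard P Q hPQ⟩, ?_⟩
  refine mutualCoherence_le_div r.cast_nonneg q.cast_nonneg
    (fun P => by rw [deVore_col, vNorm_graphIndicator, hq]) fun P Q hPQ => ?_
  rw [deVore_col, deVore_col, vHerm_graphIndicator, Complex.norm_natCast]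
  exact_mod_cast hcard P Q hPQ

/-- For distinct polynomials `P ≠ Q` of degree at most `r`, the inner product of the
corresponding DeVore columns equals the number of `x` with `P x = Q x`, which is at
most `r`; consequently `μ(D) ≤ r / q`. -/
theorem deVore_coherence_le (F : Type*) [Field F] [Fintype F] [DecidableEq F]
    (q r : ℕ) (hq : Fintype.card F = q) (hr1 : 1 ≤ r) (hrq : r < q) :
    (∀ P Q : {P : Polynomial F // P.degree ≤ (r : WithBot ℕ)}, P ≠ Q →
      vHerm (fun xy => deVore F r xy P) (fun xy => deVore F r xy Q)
          = (Nat.card {x : F // P.1.eval x = Q.1.eval x} : ℂ) ∧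
      Nat.card {x : F // P.1.eval x = Q.1.eval x} ≤ r) ∧
    mutualCoherence (deVore F r) ≤ (r : ℝ) / q :=
  deVore_coherence_le_general F q r hq

end
end

section
/- Let F_q be a finite field with q elements, let r be an integer with 1 ≤ r < q, and let D̃ = (1/√q)·D be the column-normalized DeVore matrix. Then for every integer L ≥ 1 and every vector u ∈ ℂ^{q^{r+1}} with at most L nonzero entries, (1 − (L−1)r/q) ‖u‖₂² ≤ ‖D̃u‖₂² ≤ (1 + (L−1)r/q) ‖u‖₂²; i.e., D̃ satisfies the restricted isometry property of order L with constant δ_L = (L−1)r/q, and δ_L < 1 whenever L < q/r + 1. -/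
open scoped BigOperators

noncomputable section

/-! Two distinct polynomials of degree at most `r` agree in at most `r` points, so the Gram
matrix of the normalized DeVore matrix, whose `(P, Q)` entry is `#{x | P x = Q x} / q`, has unit
diagonal and off-diagonal entries at most `r / q`. For any matrix with unit diagonal Gram entries
and off-diagonal ones bounded by `μ`, the deviation `‖Au‖² - ‖u‖²` is an off-diagonal quadratic
form bounded by `μ ((∑ |uⱼ|)² - ∑ |uⱼ|²)`, and Cauchy–Schwarz on the support of an `L`-sparse `u`
turns this into `μ (L - 1) ‖u‖²`. -/

open Finset Matrix Polynomial

section Coherence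

variable {m n : Type*} [Fintype m] [Fintype n]

lemma vNorm_sq (w : n → ℂ) : vNorm w ^ 2 = ∑ i, ‖w i‖ ^ 2 :=
  Real.sq_sqrt (by positivity)

lemma re_star_dotProduct_self (w : n → ℂ) : (star w ⬝ᵥ w).re = ∑ i, ‖w i‖ ^ 2 := by
  rw [dotProduct, Complex.re_sum]
  refine sum_congr rfl fun i _ => ?_
  rw [Pi.star_apply, Complex.star_def, Complex.conj_mul', ← Complex.ofReal_pow, Complex.ofReal_re]

lemma vNorm_mulVec_sq (A : Matrix m n ℂ) (u : n → ℂ) :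
    vNorm (A *ᵥ u) ^ 2 = (star u ⬝ᵥ (Aᴴ * A) *ᵥ u).re := by
  rw [vNorm_sq, ← re_star_dotProduct_self, star_mulVec, ← dotProduct_mulVec, mulVec_mulVec]

lemma sq_sum_norm_le_ncard_support_mul {E : Type*} [NormedAddGroup E] (u : n → E) :
    (∑ j, ‖u j‖) ^ 2 ≤ (Function.support u).ncard * ∑ j, ‖u j‖ ^ 2 := by
  classical
  have hsupp : (Function.support u).ncard = #{j | ‖u j‖ ≠ 0} := by
    rw [← Set.ncard_coe_finset]; congr 1; ext; simp
  rw [hsupp, ← sum_filter_ne_zero, ← sum_filter_ne_zero (s := univ) (f := fun j => ‖u j‖ ^ 2)]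
  simp only [ne_eq, pow_eq_zero_iff two_ne_zero]
  exact sq_sum_le_card_mul_sum_sq

lemma norm_star_dotProduct_mulVec_sub_le (G : Matrix n n ℂ) {μ : ℝ}
    (hdiag : ∀ j, G j j = 1) (hoff : ∀ j k, j ≠ k → ‖G j k‖ ≤ μ) (u : n → ℂ) :
    ‖star u ⬝ᵥ G *ᵥ u - star u ⬝ᵥ u‖ ≤ μ * ((∑ j, ‖u j‖) ^ 2 - ∑ j, ‖u j‖ ^ 2) := by
  classical
  have hentry : ∀ j k, ‖(G - 1) j k‖ ≤ μ - if j = k then μ else 0 := by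
    intro j k
    by_cases hjk : j = k
    · subst hjk; simp [hdiag]
    · simpa [hjk] using hoff j k hjk
  calc ‖star u ⬝ᵥ G *ᵥ u - star u ⬝ᵥ u‖ = ‖star u ⬝ᵥ (G - 1) *ᵥ u‖ := by
        rw [sub_mulVec, one_mulVec, dotProduct_sub]
    _ = ‖∑ j, ∑ k, star (u j) * ((G - 1) j k * u k)‖ := by
        simp only [dotProduct, mulVec, mul_sum, Pi.star_apply]
    _ ≤ ∑ j, ∑ k, ‖u j‖ * ((μ - if j = k then μ else 0) * ‖u k‖) := by
        refine (norm_sum_le _ _).trans (sum_le_sum fun j _ => (norm_sum_le _ _).trans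
          (sum_le_sum fun k _ => ?_))
        rw [norm_mul, norm_mul, norm_star]
        gcongr
        exact hentry j k
    _ = μ * ((∑ j, ‖u j‖) ^ 2 - ∑ j, ‖u j‖ ^ 2) := by
        simp only [mul_sub, sub_mul, sum_sub_distrib, ite_mul, zero_mul, mul_ite, mul_zero,
          sum_ite_eq, mem_univ, if_true, sq, sum_mul, mul_sum]
        exact congrArg₂ _ (sum_congr rfl fun j _ => sum_congr rfl fun k _ => by ring)
          (sum_congr rfl fun j _ => by ring)

theorem abs_vNorm_mulVec_sq_sub_le_of_coherence (A : Matrix m n ℂ) {μ : ℝ} (hμ : 0 ≤ μ)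
    (hdiag : ∀ j, (Aᴴ * A) j j = 1) (hoff : ∀ j k, j ≠ k → ‖(Aᴴ * A) j k‖ ≤ μ)
    {L : ℕ} {u : n → ℂ} (hu : (Function.support u).ncard ≤ L) :
    |vNorm (A *ᵥ u) ^ 2 - vNorm u ^ 2| ≤ (L - 1) * μ * vNorm u ^ 2 := by
  have hsum : (∑ j, ‖u j‖) ^ 2 - ∑ j, ‖u j‖ ^ 2 ≤ (L - 1) * ∑ j, ‖u j‖ ^ 2 := by
    have hL : ((Function.support u).ncard : ℝ) ≤ L := by exact_mod_cast hu
    nlinarith [sq_sum_norm_le_ncard_support_mul u,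
      mul_le_mul_of_nonneg_right hL (sum_nonneg (s := univ) fun j _ => sq_nonneg ‖u j‖)]
  calc |vNorm (A *ᵥ u) ^ 2 - vNorm u ^ 2| = |(star u ⬝ᵥ (Aᴴ * A) *ᵥ u - star u ⬝ᵥ u).re| := by
        rw [vNorm_mulVec_sq, vNorm_sq, Complex.sub_re, re_star_dotProduct_self]
    _ ≤ ‖star u ⬝ᵥ (Aᴴ * A) *ᵥ u - star u ⬝ᵥ u‖ := Complex.abs_re_le_norm _
    _ ≤ μ * ((∑ j, ‖u j‖) ^ 2 - ∑ j, ‖u j‖ ^ 2) := norm_star_dotProduct_mulVec_sub_le _ hdiag hoff u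
    _ ≤ μ * ((L - 1) * ∑ j, ‖u j‖ ^ 2) := by gcongr
    _ = (L - 1) * μ * vNorm u ^ 2 := by rw [vNorm_sq]; ring

end Coherence

theorem Polynomial.card_eval_eq_le_of_ne {R : Type*} [CommRing R] [IsDomain R] [Fintype R]
    [DecidableEq R] {p q : R[X]} {r : ℕ} (hpq : p ≠ q) (hp : p.degree ≤ r) (hq : q.degree ≤ r) :
    #{x | p.eval x = q.eval x} ≤ r := by
  by_contra! hlt
  have hlt' : (r : WithBot ℕ) < #{x | p.eval x = q.eval x} := by exact_mod_cast hlt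
  exact hpq <| eq_of_degrees_lt_of_eval_finset_eq _ (hp.trans_lt hlt') (hq.trans_lt hlt')
    fun x hx => (mem_filter.mp hx).2

section DeVore

variable {F : Type*} [Field F] [Fintype F] [DecidableEq F] {r : ℕ}

lemma deVore_gram_apply (P Q : {P : F[X] // P.degree ≤ (r : WithBot ℕ)}) :
    ((deVore F r)ᴴ * deVore F r) P Q = #{x | P.1.eval x = Q.1.eval x} := by
  simp [mul_apply, deVore, Fintype.sum_prod_type, eq_comm]

lemma normalized_deVore_gram_apply (P Q : {P : F[X] // P.degree ≤ (r : WithBot ℕ)}) :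
    ((((√(Fintype.card F) : ℝ) : ℂ)⁻¹ • deVore F r)ᴴ *
      (((√(Fintype.card F) : ℝ) : ℂ)⁻¹ • deVore F r)) P Q
      = #{x | P.1.eval x = Q.1.eval x} / Fintype.card F := by
  have hscalar : star (((√(Fintype.card F) : ℝ) : ℂ)⁻¹) * ((√(Fintype.card F) : ℝ) : ℂ)⁻¹
      = (Fintype.card F : ℂ)⁻¹ := by
    rw [star_inv₀, Complex.star_def, Complex.conj_ofReal, ← mul_inv, ← Complex.ofReal_mul,
      Real.mul_self_sqrt (Nat.cast_nonneg _), Complex.ofReal_natCast]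
  rw [conjTranspose_smul, Matrix.smul_mul, Matrix.mul_smul, smul_smul, hscalar,
    Matrix.smul_apply, deVore_gram_apply, smul_eq_mul, inv_mul_eq_div]

lemma normalized_deVore_gram_diag (P : {P : F[X] // P.degree ≤ (r : WithBot ℕ)}) :
    ((((√(Fintype.card F) : ℝ) : ℂ)⁻¹ • deVore F r)ᴴ *
      (((√(Fintype.card F) : ℝ) : ℂ)⁻¹ • deVore F r)) P P = 1 := by
  rw [normalized_deVore_gram_apply, filter_true_of_mem fun _ _ => rfl, card_univ]
  exact div_self (Nat.cast_ne_zero.mpr Fintype.card_ne_zero)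

lemma norm_normalized_deVore_gram_le {P Q : {P : F[X] // P.degree ≤ (r : WithBot ℕ)}}
    (hPQ : P ≠ Q) :
    ‖((((√(Fintype.card F) : ℝ) : ℂ)⁻¹ • deVore F r)ᴴ *
      (((√(Fintype.card F) : ℝ) : ℂ)⁻¹ • deVore F r)) P Q‖ ≤ r / Fintype.card F := by
  rw [normalized_deVore_gram_apply, norm_div, Complex.norm_natCast, Complex.norm_natCast]
  gcongr
  exact_mod_cast card_eval_eq_le_of_ne (Subtype.coe_ne_coe.mpr hPQ) P.2 Q.2

end DeVore

theorem deVore_rip_general (F : Type*) [Field F] [Fintype F] [DecidableEq F]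
    (q r : ℕ) (hq : Fintype.card F = q) (hr1 : 1 ≤ r)
    (L : ℕ) :
    (∀ u : {P : Polynomial F // P.degree ≤ (r : WithBot ℕ)} → ℂ,
      (Function.support u).ncard ≤ L →
      (1 - ((L : ℝ) - 1) * r / q) * vNorm u ^ 2 ≤
          vNorm (Matrix.mulVec ((((Real.sqrt q : ℝ) : ℂ))⁻¹ • deVore F r) u) ^ 2 ∧
      vNorm (Matrix.mulVec ((((Real.sqrt q : ℝ) : ℂ))⁻¹ • deVore F r) u) ^ 2 ≤
          (1 + ((L : ℝ) - 1) * r / q) * vNorm u ^ 2) ∧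
    ((L : ℝ) < (q : ℝ) / r + 1 → ((L : ℝ) - 1) * r / q < 1) := by
  subst hq
  have hcard : (0 : ℝ) < Fintype.card F := by exact_mod_cast Fintype.card_pos
  refine ⟨fun u hu => ?_, fun hL => ?_⟩
  · have hrip := abs_le.mp <| abs_vNorm_mulVec_sq_sub_le_of_coherence _ (by positivity)
      normalized_deVore_gram_diag (fun _ _ => norm_normalized_deVore_gram_le) hu
    have hδ : ((L : ℝ) - 1) * r / Fintype.card F * vNorm u ^ 2
        = (L - 1) * (r / Fintype.card F) * vNorm u ^ 2 := by ring
    constructor <;> linarith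
  · have hr : (0 : ℝ) < r := by exact_mod_cast hr1
    rw [div_lt_one hcard, ← lt_div_iff₀ hr]
    linarith

/-- The column-normalized DeVore matrix `D̃ = (1/√q) D` satisfies the RIP of order `L`
with constant `δ_L = (L−1) r / q`, and `δ_L < 1` whenever `L < q/r + 1`. -/
theorem deVore_rip (F : Type*) [Field F] [Fintype F] [DecidableEq F]
    (q r : ℕ) (hq : Fintype.card F = q) (hr1 : 1 ≤ r) (hrq : r < q)
    (L : ℕ) (hL : 1 ≤ L) :
    (∀ u : {P : Polynomial F // P.degree ≤ (r : WithBot ℕ)} → ℂ,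
      (Function.support u).ncard ≤ L →
      (1 - ((L : ℝ) - 1) * r / q) * vNorm u ^ 2 ≤
          vNorm (Matrix.mulVec ((((Real.sqrt q : ℝ) : ℂ))⁻¹ • deVore F r) u) ^ 2 ∧
      vNorm (Matrix.mulVec ((((Real.sqrt q : ℝ) : ℂ))⁻¹ • deVore F r) u) ^ 2 ≤
          (1 + ((L : ℝ) - 1) * r / q) * vNorm u ^ 2) ∧
    ((L : ℝ) < (q : ℝ) / r + 1 → ((L : ℝ) - 1) * r / q < 1) :=
  deVore_rip_general F q r hq hr1 L

end
end

section
/- Let F_{q₁} and F_{q₂} be finite fields with q₁ and q₂ elements, let r₁, r₂ be integers with 1 ≤ r₁ < q₁ and 1 ≤ r₂ < q₂, let U_b and V_b be the corresponding DeVore matrices, and let S_C = (1/√(q₁q₂)) · (U_b ⊗ V_b) be the column-normalized Kronecker product. Then for every integer L ≥ 1 and every vector u with at most L nonzero entries, (1 − (L−1)μ*) ‖u‖₂² ≤ ‖S_C u‖₂² ≤ (1 + (L−1)μ*) ‖u‖₂², where μ* = max{r₁/q₁, r₂/q₂}; i.e., S_C satisfies the restricted isometry property of order L with constant δ_L = (L−1)·max{r₁/q₁,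 r₂/q₂}. -/
/-!
If the columns of `Θ` have unit norm and pairwise inner products of modulus at most `μ`, then
`‖Θu‖² - ‖u‖²` is the Hermitian form of the off-diagonal part of the Gram matrix `ΘᴴΘ`; bounding its
entries by `μ` and using `(∑ |uᵢ|)² ≤ s ∑ |uᵢ|²` for `s`-sparse `u` gives a deviation of at most
`(s - 1) μ ‖u‖²`. The Gram matrix of `A ⊗ B` is `AᴴA ⊗ BᴴB`, and Gram entries of unit columns have
modulus at most `1` (Cauchy–Schwarz), so the coherence of `A ⊗ B` is at most `max μ_A μ_B`. For the
DeVore matrix scaled by `1/√q`, the Gram entry at `(P, Q)` is `#{x | P x = Q x} / q`, which is at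
most `r / q` when `P ≠ Q` because `P - Q` has at most `r` roots.
-/

open scoped BigOperators

noncomputable section

open Matrix Finset Polynomial
open scoped Kronecker

theorem sq_sum_le_ncard_support_mul_sum_sq {ι : Type*} [Fintype ι] (a : ι → ℝ) :
    (∑ i, a i) ^ 2 ≤ (Function.support a).ncard * ∑ i, a i ^ 2 := by
  classical
  have hs : Function.support a = ↑({i | a i ≠ 0} : Finset ι) := by ext; simp
  rw [hs, Set.ncard_coe_finset, ← sum_filter_ne_zero (s := univ) (f := a),
    ← sum_filter_of_ne (s := univ) (f := fun i => a i ^ 2) (p := fun i => a i ≠ 0)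
      (fun i _ h => by simpa using h)]
  exact sq_sum_le_card_mul_sum_sq

theorem norm_star_dotProduct_mulVec_le {𝕜 ι : Type*} [RCLike 𝕜] [Fintype ι]
    {E : Matrix ι ι 𝕜} {μ : ℝ} (hμ : 0 ≤ μ) (hdiag : ∀ i, E i i = 0)
    (hoff : ∀ i j, i ≠ j → ‖E i j‖ ≤ μ) (u : ι → 𝕜) :
    ‖star u ⬝ᵥ E *ᵥ u‖ ≤ ((Function.support u).ncard - 1) * μ * ∑ i, ‖u i‖ ^ 2 := by
  classical
  have hentry : ∀ i j, ‖E i j‖ ≤ μ - if i = j then μ else 0 := by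
    intro i j
    by_cases hij : i = j
    · simp [hij, hdiag]
    · simpa [hij] using hoff i j hij
  have hsupp : Function.support (fun i => ‖u i‖) = Function.support u := by ext; simp
  calc ‖star u ⬝ᵥ E *ᵥ u‖ = ‖∑ j, ∑ i, star (u i) * E i j * u j‖ := by
        simp only [dot_mulVec_eq_sum_sum, Pi.star_apply]
    _ ≤ ∑ j, ∑ i, ‖u i‖ * (μ - if i = j then μ else 0) * ‖u j‖ := by
        refine (norm_sum_le _ _).trans (sum_le_sum fun j _ => (norm_sum_le _ _).trans
          (sum_le_sum fun i _ => ?_))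
        rw [norm_mul, norm_mul, norm_star]
        gcongr
        exact hentry i j
    _ = μ * ((∑ i, ‖u i‖) ^ 2 - ∑ i, ‖u i‖ ^ 2) := by
        simp only [mul_sub, sub_mul, sum_sub_distrib, mul_ite, ite_mul, mul_zero, zero_mul,
          sum_ite_eq', mem_univ, if_true]
        rw [sq, sum_mul_sum, mul_sum, mul_sum, sum_comm]
        simp only [mul_sum]
        congr 1
        · exact sum_congr rfl fun _ _ => sum_congr rfl fun _ _ => by ring
        · exact sum_congr rfl fun _ _ => by ring
    _ ≤ μ * (((Function.support u).ncard - 1) * ∑ i, ‖u i‖ ^ 2) := by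
        gcongr
        have := sq_sum_le_ncard_support_mul_sum_sq (fun i => ‖u i‖)
        rw [hsupp] at this
        linarith
    _ = _ := by ring

theorem vNorm_sq_eq_star_dotProduct {ι : Type*} [Fintype ι] (u : ι → ℂ) :
    ((vNorm u ^ 2 : ℝ) : ℂ) = star u ⬝ᵥ u := by
  rw [vNorm, Real.sq_sqrt (by positivity)]
  simp [dotProduct, Complex.conj_mul']

theorem star_mulVec_dotProduct_mulVec {m n R : Type*} [Fintype m] [Fintype n] [Semiring R]
    [StarRing R] (Θ : Matrix m n R) (u : n → R) :
    star (Θ *ᵥ u) ⬝ᵥ Θ *ᵥ u = star u ⬝ᵥ (Θᴴ * Θ) *ᵥ u := by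
  rw [star_mulVec, ← dotProduct_mulVec, mulVec_mulVec]

def IsRIP {m n : Type*} [Fintype m] [Fintype n] (Θ : Matrix m n ℂ) (L : ℕ) (δ : ℝ) : Prop :=
  ∀ u : n → ℂ, (Function.support u).ncard ≤ L →
    (1 - δ) * vNorm u ^ 2 ≤ vNorm (Θ *ᵥ u) ^ 2 ∧ vNorm (Θ *ᵥ u) ^ 2 ≤ (1 + δ) * vNorm u ^ 2

def IsCoherent {𝕜 m n : Type*} [RCLike 𝕜] [Fintype m] (Θ : Matrix m n 𝕜) (μ : ℝ) : Prop :=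
  (∀ j, (Θᴴ * Θ) j j = 1) ∧ ∀ i j, i ≠ j → ‖(Θᴴ * Θ) i j‖ ≤ μ

theorem IsCoherent.isRIP {m n : Type*} [Fintype m] [Fintype n] {Θ : Matrix m n ℂ} {μ : ℝ}
    (hΘ : IsCoherent Θ μ) (hμ : 0 ≤ μ) (L : ℕ) : IsRIP Θ L ((L - 1) * μ) := by
  classical
  intro u hu
  have hquad : ((vNorm (Θ *ᵥ u) ^ 2 : ℝ) : ℂ) =
      ((vNorm u ^ 2 : ℝ) : ℂ) + star u ⬝ᵥ (Θᴴ * Θ - 1) *ᵥ u := by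
    rw [vNorm_sq_eq_star_dotProduct, vNorm_sq_eq_star_dotProduct, star_mulVec_dotProduct_mulVec,
      sub_mulVec, one_mulVec, dotProduct_sub, add_sub_cancel]
  have hdev : |vNorm (Θ *ᵥ u) ^ 2 - vNorm u ^ 2| ≤ (L - 1) * μ * vNorm u ^ 2 := by
    have hbound := norm_star_dotProduct_mulVec_le hμ (E := Θᴴ * Θ - 1)
      (by simp [hΘ.1]) (fun i j hij => by simpa [hij] using hΘ.2 i j hij) u
    rw [← Real.norm_eq_abs, ← Complex.norm_real, Complex.ofReal_sub, hquad, add_sub_cancel_left]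
    refine hbound.trans ?_
    rw [vNorm, Real.sq_sqrt (by positivity)]
    gcongr
  constructor <;> linarith [abs_le.mp hdev]

theorem conjTranspose_mul_self_apply_eq_inner {𝕜 m n : Type*} [RCLike 𝕜] [Fintype m]
    (Θ : Matrix m n 𝕜) (i j : n) :
    (Θᴴ * Θ) i j = inner 𝕜 (WithLp.toLp 2 fun k => Θ k i) (WithLp.toLp 2 fun k => Θ k j) := by
  simp [mul_apply, EuclideanSpace.inner_toLp_toLp, dotProduct, mul_comm]

theorem norm_conjTranspose_mul_self_apply_le_one {𝕜 m n : Type*} [RCLike 𝕜] [Fintype m]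
    {Θ : Matrix m n 𝕜} (hΘ : ∀ j, (Θᴴ * Θ) j j = 1) (i j : n) : ‖(Θᴴ * Θ) i j‖ ≤ 1 := by
  set c : n → EuclideanSpace 𝕜 m := fun j => WithLp.toLp 2 fun k => Θ k j
  have hcol : ∀ j, ‖c j‖ = 1 := fun j => by
    have h := hΘ j
    rw [conjTranspose_mul_self_apply_eq_inner, inner_self_eq_norm_sq_to_K] at h
    exact_mod_cast (pow_eq_one_iff_of_nonneg (norm_nonneg _) two_ne_zero).mp (by exact_mod_cast h)
  calc ‖(Θᴴ * Θ) i j‖ = ‖inner 𝕜 (c i) (c j)‖ := by rw [conjTranspose_mul_self_apply_eq_inner]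
    _ ≤ ‖c i‖ * ‖c j‖ := norm_inner_le_norm _ _
    _ = 1 := by rw [hcol, hcol, one_mul]

theorem IsCoherent.kronecker {𝕜 m n m' n' : Type*} [RCLike 𝕜] [Fintype m] [Fintype m']
    {A : Matrix m n 𝕜} {B : Matrix m' n' 𝕜} {μ₁ μ₂ : ℝ}
    (hA : IsCoherent A μ₁) (hB : IsCoherent B μ₂) : IsCoherent (A ⊗ₖ B) (max μ₁ μ₂) := by
  have hgram : (A ⊗ₖ B)ᴴ * (A ⊗ₖ B) = (Aᴴ * A) ⊗ₖ (Bᴴ * B) := by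
    rw [conjTranspose_kronecker, mul_kronecker_mul]
  refine ⟨fun j => by simp [hgram, hA.1, hB.1], ?_⟩
  rintro ⟨i₁, i₂⟩ ⟨j₁, j₂⟩ hij
  rw [hgram, kronecker_apply, norm_mul]
  by_cases h₁ : i₁ = j₁
  · subst h₁
    have h₂ : i₂ ≠ j₂ := fun h => hij (by rw [h])
    rw [hA.1, norm_one, one_mul]
    exact (hB.2 _ _ h₂).trans (le_max_right _ _)
  · calc ‖(Aᴴ * A) i₁ j₁‖ * ‖(Bᴴ * B) i₂ j₂‖ ≤ ‖(Aᴴ * A) i₁ j₁‖ :=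
          mul_le_of_le_one_right (norm_nonneg _) (norm_conjTranspose_mul_self_apply_le_one hB.1 _ _)
      _ ≤ max μ₁ μ₂ := (hA.2 _ _ h₁).trans (le_max_left _ _)

theorem card_filter_eval_eq_le_of_ne {R : Type*} [CommRing R] [IsDomain R] [DecidableEq R]
    {p q : R[X]} {r : ℕ} (hp : p.degree ≤ r) (hq : q.degree ≤ r) (hpq : p ≠ q) (s : Finset R) :
    #{x ∈ s | p.eval x = q.eval x} ≤ r := by
  by_contra! h
  refine hpq (eq_of_degree_sub_lt_of_eval_finset_eq {x ∈ s | p.eval x = q.eval x} ?_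
    fun x hx => (mem_filter.mp hx).2)
  exact (degree_sub_le p q).trans_lt ((max_le hp hq).trans_lt (by exact_mod_cast h))

theorem deVore_conjTranspose_mul_self_apply (F : Type*) [Field F] [Fintype F] [DecidableEq F]
    (r : ℕ) (P Q : {P : F[X] // P.degree ≤ (r : WithBot ℕ)}) :
    ((deVore F r)ᴴ * deVore F r) P Q = #{x | P.1.eval x = Q.1.eval x} := by
  simp [mul_apply, Fintype.sum_prod_type, deVore, sum_boole, eq_comm]

def normalizedDeVore (F : Type*) [Field F] [Fintype F] [DecidableEq F] (r : ℕ) :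
    Matrix (F × F) {P : F[X] // P.degree ≤ (r : WithBot ℕ)} ℂ :=
  ((√(Fintype.card F) : ℝ) : ℂ)⁻¹ • deVore F r

theorem isCoherent_normalizedDeVore (F : Type*) [Field F] [Fintype F] [DecidableEq F] (r : ℕ) :
    IsCoherent (normalizedDeVore F r) (r / Fintype.card F) := by
  have hq : (0 : ℝ) < Fintype.card F := by exact_mod_cast Fintype.card_pos
  have hgram : ∀ P Q, ((normalizedDeVore F r)ᴴ * normalizedDeVore F r) P Q =
      ((#{x | P.1.eval x = Q.1.eval x} / Fintype.card F : ℝ) : ℂ) := by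
    intro P Q
    simp only [normalizedDeVore, conjTranspose_smul, Matrix.smul_mul, Matrix.mul_smul,
      Matrix.smul_apply, deVore_conjTranspose_mul_self_apply, smul_eq_mul]
    rw [star_inv₀, Complex.star_def, Complex.conj_ofReal, ← mul_assoc, ← mul_inv,
      ← Complex.ofReal_mul, Real.mul_self_sqrt (Nat.cast_nonneg _)]
    push_cast
    ring
  constructor
  · intro P
    simp [hgram, hq.ne']
  · intro P Q hPQ
    rw [hgram, Complex.norm_real, Real.norm_of_nonneg (by positivity)]
    gcongr
    exact_mod_cast card_filter_eval_eq_le_of_ne P.2 Q.2 (Subtype.coe_injective.ne hPQ) _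

theorem smul_deVore_kronecker (F₁ F₂ : Type*) [Field F₁] [Fintype F₁] [DecidableEq F₁]
    [Field F₂] [Fintype F₂] [DecidableEq F₂] (r₁ r₂ : ℕ) :
    ((√(Fintype.card F₁ * Fintype.card F₂ : ℕ) : ℝ) : ℂ)⁻¹ • (deVore F₁ r₁ ⊗ₖ deVore F₂ r₂) =
      normalizedDeVore F₁ r₁ ⊗ₖ normalizedDeVore F₂ r₂ := by
  rw [normalizedDeVore, normalizedDeVore, smul_kronecker, kronecker_smul, smul_smul, Nat.cast_mul,
    Real.sqrt_mul (Nat.cast_nonneg _), Complex.ofReal_mul, mul_inv, mul_comm]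

theorem deVore_kron_rip_general (F₁ F₂ : Type*) [Field F₁] [Fintype F₁] [DecidableEq F₁]
    [Field F₂] [Fintype F₂] [DecidableEq F₂]
    (q₁ q₂ r₁ r₂ : ℕ) (hq₁ : Fintype.card F₁ = q₁) (hq₂ : Fintype.card F₂ = q₂)
    (L : ℕ)
    (u : {P : Polynomial F₁ // P.degree ≤ (r₁ : WithBot ℕ)} ×
         {P : Polynomial F₂ // P.degree ≤ (r₂ : WithBot ℕ)} → ℂ)
    (hu : (Function.support u).ncard ≤ L) :
    (1 - ((L : ℝ) - 1) * max ((r₁ : ℝ) / q₁) ((r₂ : ℝ) / q₂)) * vNorm u ^ 2 ≤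
        vNorm (Matrix.mulVec
          ((((Real.sqrt (q₁ * q₂ : ℕ) : ℝ) : ℂ))⁻¹ •
            Matrix.kroneckerMap (· * ·) (deVore F₁ r₁) (deVore F₂ r₂)) u) ^ 2 ∧
    vNorm (Matrix.mulVec
          ((((Real.sqrt (q₁ * q₂ : ℕ) : ℝ) : ℂ))⁻¹ •
            Matrix.kroneckerMap (· * ·) (deVore F₁ r₁) (deVore F₂ r₂)) u) ^ 2 ≤
        (1 + ((L : ℝ) - 1) * max ((r₁ : ℝ) / q₁) ((r₂ : ℝ) / q₂)) * vNorm u ^ 2 := by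
  subst hq₁ hq₂
  rw [smul_deVore_kronecker]
  exact ((isCoherent_normalizedDeVore F₁ r₁).kronecker (isCoherent_normalizedDeVore F₂ r₂)).isRIP
    (by positivity) L u hu

/-- The column-normalized Kronecker product `S_C = (1/√(q₁q₂)) (U_b ⊗ V_b)` of two
DeVore matrices satisfies the RIP of order `L` with constant
`δ_L = (L−1) · max {r₁/q₁, r₂/q₂}`. -/
theorem deVore_kron_rip (F₁ F₂ : Type*) [Field F₁] [Fintype F₁] [DecidableEq F₁]
    [Field F₂] [Fintype F₂] [DecidableEq F₂]
    (q₁ q₂ r₁ r₂ : ℕ) (hq₁ : Fintype.card F₁ = q₁) (hq₂ : Fintype.card F₂ = q₂)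
    (hr₁ : 1 ≤ r₁) (hrq₁ : r₁ < q₁) (hr₂ : 1 ≤ r₂) (hrq₂ : r₂ < q₂)
    (L : ℕ) (hL : 1 ≤ L)
    (u : {P : Polynomial F₁ // P.degree ≤ (r₁ : WithBot ℕ)} ×
         {P : Polynomial F₂ // P.degree ≤ (r₂ : WithBot ℕ)} → ℂ)
    (hu : (Function.support u).ncard ≤ L) :
    (1 - ((L : ℝ) - 1) * max ((r₁ : ℝ) / q₁) ((r₂ : ℝ) / q₂)) * vNorm u ^ 2 ≤
        vNorm (Matrix.mulVec
          ((((Real.sqrt (q₁ * q₂ : ℕ) : ℝ) : ℂ))⁻¹ •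
            Matrix.kroneckerMap (· * ·) (deVore F₁ r₁) (deVore F₂ r₂)) u) ^ 2 ∧
    vNorm (Matrix.mulVec
          ((((Real.sqrt (q₁ * q₂ : ℕ) : ℝ) : ℂ))⁻¹ •
            Matrix.kroneckerMap (· * ·) (deVore F₁ r₁) (deVore F₂ r₂)) u) ^ 2 ≤
        (1 + ((L : ℝ) - 1) * max ((r₁ : ℝ) / q₁) ((r₂ : ℝ) / q₂)) * vNorm u ^ 2 :=
  deVore_kron_rip_general F₁ F₂ q₁ q₂ r₁ r₂ hq₁ hq₂ L u hu
end
end
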